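/- arXiv:2004.03448 — 2 statements merged into one kernel-verified Lean document; each statement's English description precedes it below -/
import Mathlib

section
/- Define r₀(t, χ) = r(√t, χ) = Φ(-χ - √t) + Φ(-χ + √t) for t ≥ 0. If 0 < χ < √3, then r₀(·, χ) is strictly concave on an interval near 0; more precisely, the second derivative of t ↦ r₀(t, χ) at t = 0⁺ is negative when χ² < 3. -/
/-!
For `t = b² > 0` the second derivative of `r₀` is an explicit expression in `b`; factoring out
`φ(χ) e^{-b²/2}` turns it into `(χ³ A(bχ) - χ B(bχ)) / 2` with `A(x) = (x cosh x - sinh x) / x³`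
and `B(x) = sinh x / x`. As `x → 0⁺`, `B → 1` and, by l'Hôpital, `A → 1/3`, so `∂²r₀/∂t²` tends to
`χ (χ² - 3) φ(χ) / 6`, which is negative for `0 < χ < √3`. A negative right limit of `f''` at `0`
makes `f'' < 0` on some `(0, ε)`, hence `r₀` is strictly concave on `[0, ε]`.
-/

open MeasureTheory ProbabilityTheory Real Set Filter

/-- Standard normal CDF. -/
noncomputable def Phi (x : ℝ) : ℝ := (gaussianReal 0 1 (Set.Iic x)).toReal

/-- Non-coverage function `r(b, χ) = Φ(-χ-b) + Φ(-χ+b)`. -/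
noncomputable def r (b χ : ℝ) : ℝ := Phi (-χ - b) + Phi (-χ + b)

/-- `r₀(t, χ) = r(√t, χ)`. -/
noncomputable def r0 (t χ : ℝ) : ℝ := r (Real.sqrt t) χ

open Topology

lemma exists_strictConcaveOn_Icc_of_tendsto_deriv_deriv {f : ℝ → ℝ} {a L : ℝ}
    (hf : ContinuousOn f (Ici a)) (hL : L < 0)
    (hlim : Tendsto (deriv (deriv f)) (𝓝[>] a) (𝓝 L)) :
    ∃ b > a, StrictConcaveOn ℝ (Icc a b) f := by
  obtain ⟨b, hab, hneg⟩ := mem_nhdsGT_iff_exists_Ioc_subset.mp (hlim.eventually_lt_const hL)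
  refine ⟨b, hab,
    strictConcaveOn_of_deriv2_neg (convex_Icc a b) (hf.mono Icc_subset_Ici_self) ?_⟩
  rw [interior_Icc]
  exact fun x hx => hneg (Ioo_subset_Ioc_self hx)

lemma tendsto_sinh_div_self_nhdsGT :
    Tendsto (fun x => sinh x / x) (𝓝[>] 0) (𝓝 1) := by
  simpa [div_eq_inv_mul] using (hasDerivAt_sinh 0).tendsto_slope_zero_right

lemma hasDerivAt_mul_cosh_sub_sinh (x : ℝ) :
    HasDerivAt (fun x => x * cosh x - sinh x) (x * sinh x) x :=
  (((hasDerivAt_id' x).mul (hasDerivAt_cosh x)).sub (hasDerivAt_sinh x)).congr_deriv (by ring)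

lemma tendsto_mul_cosh_sub_sinh_div_pow_three_nhdsGT :
    Tendsto (fun x => (x * cosh x - sinh x) / x ^ 3) (𝓝[>] 0) (𝓝 (1 / 3)) := by
  have hquot : Tendsto (fun x => x * sinh x / (3 * x ^ 2)) (𝓝[>] 0) (𝓝 (1 / 3)) := by
    refine (tendsto_sinh_div_self_nhdsGT.div_const 3).congr' ?_ |>.trans (by norm_num)
    filter_upwards [self_mem_nhdsWithin] with x (hx : 0 < x)
    field_simp
  refine HasDerivAt.lhopital_zero_right_on_Ioo one_pos
    (fun x _ => hasDerivAt_mul_cosh_sub_sinh x) (fun x _ => by simpa using hasDerivAt_pow 3 x)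
    (fun x hx => by have := hx.1; positivity) ?_ ?_ hquot
  · exact tendsto_nhdsWithin_of_tendsto_nhds (by simpa using (by fun_prop :
      Continuous fun x : ℝ => x * cosh x - sinh x).tendsto 0)
  · exact tendsto_nhdsWithin_of_tendsto_nhds (by simpa using (continuous_pow 3).tendsto (0 : ℝ))

noncomputable def phi (x : ℝ) : ℝ := (√(2 * π))⁻¹ * exp (-x ^ 2 / 2)

lemma gaussianPDFReal_zero_one : gaussianPDFReal 0 1 = phi := by
  ext x
  simp [gaussianPDFReal, phi]

lemma phi_pos (x : ℝ) : 0 < phi x := by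
  unfold phi
  positivity

lemma phi_neg (x : ℝ) : phi (-x) = phi x := by
  rw [phi, phi, neg_sq]

lemma continuous_phi : Continuous phi := by
  unfold phi
  fun_prop

lemma hasDerivAt_phi (x : ℝ) : HasDerivAt phi (-x * phi x) x := by
  have hexp : HasDerivAt (fun y : ℝ => -y ^ 2 / 2) (-x) x :=
    ((hasDerivAt_pow 2 x).neg.div_const 2).congr_deriv (by ring)
  exact (hexp.exp.const_mul _).congr_deriv (by rw [phi]; ring)

lemma phi_add_eq (χ b : ℝ) : phi (b + χ) = phi χ * exp (-b ^ 2 / 2) * exp (-(b * χ)) := by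
  simp only [phi, mul_assoc, ← exp_add]
  ring_nf

lemma phi_sub_eq (χ b : ℝ) : phi (b - χ) = phi χ * exp (-b ^ 2 / 2) * exp (b * χ) := by
  simp only [phi, mul_assoc, ← exp_add]
  ring_nf

lemma Phi_eq_integral (x : ℝ) : Phi x = ∫ u in Iic x, phi u := by
  rw [Phi, gaussianReal_apply_eq_integral 0 one_ne_zero, gaussianPDFReal_zero_one,
    ENNReal.toReal_ofReal (integral_nonneg fun u => (phi_pos u).le)]

lemma hasDerivAt_Phi (x : ℝ) : HasDerivAt Phi (phi x) x := by
  have hint : Integrable phi := gaussianPDFReal_zero_one ▸ integrable_gaussianPDFReal 0 1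
  have hPhi : Phi = fun y => Phi 0 + ∫ u in (0 : ℝ)..y, phi u := by
    ext y
    rw [Phi_eq_integral, Phi_eq_integral,
      ← intervalIntegral.integral_Iic_sub_Iic hint.integrableOn hint.integrableOn]
    ring
  rw [hPhi]
  exact (continuous_phi.integral_hasStrictDerivAt 0 x).hasDerivAt.const_add _

lemma continuous_Phi : Continuous Phi :=
  continuous_iff_continuousAt.mpr fun x => (hasDerivAt_Phi x).continuousAt

lemma hasDerivAt_r (χ b : ℝ) :
    HasDerivAt (fun b => r b χ) (phi (b - χ) - phi (b + χ)) b := by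
  have hminus : phi (-χ - b) = phi (b + χ) := by rw [← phi_neg (b + χ)]; congr 1; ring
  have hplus : phi (-χ + b) = phi (b - χ) := congrArg phi (by ring)
  have h := ((hasDerivAt_Phi _).comp b ((hasDerivAt_id' b).const_sub (-χ))).add
    ((hasDerivAt_Phi _).comp b ((hasDerivAt_id' b).const_add (-χ)))
  exact h.congr_deriv (by rw [hminus, hplus]; ring)

lemma continuous_r0 (χ : ℝ) : Continuous fun t => r0 t χ := by
  unfold r0 r
  have := continuous_Phi
  fun_prop

noncomputable def r0Deriv (χ t : ℝ) : ℝ := (phi (√t - χ) - phi (√t + χ)) / (2 * √t)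

/-- `∂²r₀/∂t²` at `t = b²`. -/
noncomputable def r0Deriv2 (χ b : ℝ) : ℝ :=
  (b * ((b + χ) * phi (b + χ) - (b - χ) * phi (b - χ)) - (phi (b - χ) - phi (b + χ))) /
    (4 * b ^ 3)

lemma hasDerivAt_r0 (χ : ℝ) {t : ℝ} (ht : 0 < t) :
    HasDerivAt (fun s => r0 s χ) (r0Deriv χ t) t :=
  ((hasDerivAt_r χ √t).comp t (hasDerivAt_sqrt ht.ne')).congr_deriv (by
    rw [r0Deriv]; ring)

lemma hasDerivAt_r0Deriv (χ : ℝ) {t : ℝ} (ht : 0 < t) :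
    HasDerivAt (r0Deriv χ) (r0Deriv2 χ √t) t := by
  have hb : 0 < √t := sqrt_pos.mpr ht
  have hsqrt := hasDerivAt_sqrt ht.ne'
  have hnum := ((hasDerivAt_phi _).comp t (hsqrt.sub_const χ)).sub
    ((hasDerivAt_phi _).comp t (hsqrt.add_const χ))
  refine (hnum.div (hsqrt.const_mul 2) (by positivity)).congr_deriv ?_
  simp only [r0Deriv2, Pi.sub_apply, Function.comp_apply]
  field_simp
  ring

lemma deriv_deriv_r0 (χ : ℝ) {t : ℝ} (ht : 0 < t) :
    deriv (deriv fun s => r0 s χ) t = r0Deriv2 χ √t := by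
  have hderiv : deriv (fun s => r0 s χ) =ᶠ[𝓝 t] r0Deriv χ := by
    filter_upwards [Ioi_mem_nhds ht] with s hs
    exact (hasDerivAt_r0 χ hs).deriv
  rw [hderiv.deriv_eq, (hasDerivAt_r0Deriv χ ht).deriv]

lemma r0Deriv2_eq {χ b : ℝ} (hχ : χ ≠ 0) (hb : b ≠ 0) :
    r0Deriv2 χ b = phi χ * exp (-b ^ 2 / 2) *
      (χ ^ 3 * ((b * χ * cosh (b * χ) - sinh (b * χ)) / (b * χ) ^ 3) -
        χ * (sinh (b * χ) / (b * χ))) / 2 := by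
  rw [r0Deriv2, phi_add_eq, phi_sub_eq, cosh_eq, sinh_eq]
  field_simp
  ring

lemma tendsto_r0Deriv2 {χ : ℝ} (hχ : 0 < χ) :
    Tendsto (r0Deriv2 χ) (𝓝[>] 0) (𝓝 (χ * (χ ^ 2 - 3) * phi χ / 6)) := by
  have hscale : Tendsto (fun b => b * χ) (𝓝[>] 0) (𝓝[>] 0) := by
    simpa using
      ((continuous_mul_const χ).continuousWithinAt (s := Ioi 0) (x := 0)).tendsto_nhdsWithin
        fun b (hb : 0 < b) => mem_Ioi.mpr (mul_pos hb hχ)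
  have hexp : Tendsto (fun b : ℝ => exp (-b ^ 2 / 2)) (𝓝[>] 0) (𝓝 1) :=
    tendsto_nhdsWithin_of_tendsto_nhds (by
      simpa using (by fun_prop : Continuous fun b : ℝ => exp (-b ^ 2 / 2)).tendsto 0)
  have h := ((tendsto_const_nhds (x := phi χ)).mul hexp |>.mul
    (((tendsto_mul_cosh_sub_sinh_div_pow_three_nhdsGT.comp hscale).const_mul (χ ^ 3)).sub
      ((tendsto_sinh_div_self_nhdsGT.comp hscale).const_mul χ))).div_const 2
  rw [show χ * (χ ^ 2 - 3) * phi χ / 6 = phi χ * 1 * (χ ^ 3 * (1 / 3) - χ * 1) / 2 by ring]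
  refine h.congr' ?_
  filter_upwards [self_mem_nhdsWithin] with b (hb : 0 < b)
  exact (r0Deriv2_eq hχ.ne' hb.ne').symm

lemma tendsto_deriv_deriv_r0 {χ : ℝ} (hχ : 0 < χ) :
    Tendsto (deriv (deriv fun s => r0 s χ)) (𝓝[>] 0)
      (𝓝 (χ * (χ ^ 2 - 3) * phi χ / 6)) := by
  have hsqrt : Tendsto (√·) (𝓝[>] 0) (𝓝[>] 0) := by
    simpa using (continuous_sqrt.continuousWithinAt (s := Ioi 0) (x := 0)).tendsto_nhdsWithin
      fun t (ht : 0 < t) => mem_Ioi.mpr (sqrt_pos.mpr ht)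
  refine ((tendsto_r0Deriv2 hχ).comp hsqrt).congr' ?_
  filter_upwards [self_mem_nhdsWithin] with t ht
  exact (deriv_deriv_r0 χ ht).symm

/-- If `0 < χ` and `χ² < 3`, then `t ↦ r₀(t, χ)` is strictly concave on an interval near
`0`, and its second derivative has a negative right-limit at `t = 0`. -/
theorem r0_strictConcave_near_zero (χ : ℝ) (hχ : 0 < χ) (h3 : χ ^ 2 < 3) :
    (∃ ε > (0 : ℝ), StrictConcaveOn ℝ (Set.Icc 0 ε) (fun t => r0 t χ)) ∧
    ∃ L < (0 : ℝ), Filter.Tendsto (fun t => deriv (deriv (fun s => r0 s χ)) t)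
      (nhdsWithin 0 (Set.Ioi 0)) (nhds L) := by
  have hL : χ * (χ ^ 2 - 3) * phi χ / 6 < 0 := by
    have := mul_pos hχ (phi_pos χ)
    nlinarith
  have hlim := tendsto_deriv_deriv_r0 hχ
  exact ⟨exists_strictConcaveOn_Icc_of_tendsto_deriv_deriv (continuous_r0 χ).continuousOn
    hL hlim, _, hL, hlim⟩
end

section
/- Define ρ(m₂, χ) = sup{E_F[r(b, χ)] : F a probability measure on ℝ with E_F[b²] = m₂}. Then for each fixed m₂ > 0, ρ(m₂, ·) is weakly decreasing and continuous in χ on (0, ∞), with ρ(m₂, χ) → 0 as χ → ∞. -/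
/-!
`ρ(m₂, ·)` is the pointwise supremum, over the distributions `F` with second moment `m₂`,
of `χ ↦ E_F r(b, χ)`. Each of these is antitone and `2`-Lipschitz, because `Φ` is monotone and
`1`-Lipschitz (the standard normal density is at most `1`), so `ρ(m₂, ·)` is too.
For the limit, `r(b, χ) ≤ 2 Φ(-χ/2)` when `|b| ≤ χ/2` and `r(b, χ) ≤ 2 ≤ 8 b²/χ²` otherwise,
so `ρ(m₂, χ) ≤ 2 Φ(-χ/2) + 8 m₂/χ² → 0`.
-/

open MeasureTheory ProbabilityTheory Real Set Filter

/-- Worst-case non-coverage over distributions with second moment `m₂`. -/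
noncomputable def ρ (m₂ χ : ℝ) : ℝ :=
  sSup {x | ∃ F : Measure ℝ, IsProbabilityMeasure F ∧
    (∫ b, b ^ 2 ∂F) = m₂ ∧ (∫ b, r b χ ∂F) = x}

open scoped NNReal

lemma LipschitzWith.ciSup {ι α : Type*} [PseudoMetricSpace α] {f : ι → α → ℝ} {K : ℝ≥0}
    (hf : ∀ i, LipschitzWith K (f i)) (hbdd : ∀ x, BddAbove (range (f · x))) :
    LipschitzWith K fun x => ⨆ i, f i x := by
  cases isEmpty_or_nonempty ι
  · simpa only [Real.iSup_of_isEmpty] using LipschitzWith.const' (α := α) (0 : ℝ)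
  refine LipschitzWith.of_le_add_mul K fun x y => ciSup_le fun i => ?_
  calc f i x ≤ f i y + K * dist x y := (hf i).le_add_mul x y
    _ ≤ (⨆ i, f i y) + K * dist x y := by gcongr; exact le_ciSup (hbdd y) i

lemma LipschitzWith.integral {α β : Type*} [MeasurableSpace α] [PseudoMetricSpace β]
    {μ : Measure α} [IsProbabilityMeasure μ] {f : α → β → ℝ} {K : ℝ≥0}
    (hf : ∀ a, LipschitzWith K (f a)) (hint : ∀ x, Integrable (f · x) μ) :
    LipschitzWith K fun x => ∫ a, f a x ∂μ := by
  refine LipschitzWith.of_dist_le_mul fun x y => ?_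
  rw [dist_eq_norm, ← integral_sub (hint x) (hint y)]
  simpa using norm_integral_le_of_norm_le_const (μ := μ) (f := fun a => f a x - f a y)
    (ae_of_all _ fun a => (dist_eq_norm _ _).symm.trans_le ((hf a).dist_le_mul x y))

lemma gaussianPDF_zero_one_le_one (x : ℝ) : gaussianPDF 0 1 x ≤ 1 := by
  rw [gaussianPDF, ENNReal.ofReal_le_one, gaussianPDFReal_def]
  refine mul_le_one₀ (inv_le_one_of_one_le₀ ?_) (by positivity) (exp_le_one_iff.2 ?_)
  · rw [one_le_sqrt, NNReal.coe_one, mul_one]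
    linarith [pi_gt_three]
  · exact div_nonpos_of_nonpos_of_nonneg (neg_nonpos.2 (sq_nonneg _)) (by positivity)

lemma Phi_eq_cdf : Phi = cdf (gaussianReal 0 1) :=
  funext fun x => (cdf_eq_real _ x).symm

lemma monotone_Phi : Monotone Phi := Phi_eq_cdf ▸ monotone_cdf _

lemma Phi_nonneg (x : ℝ) : 0 ≤ Phi x := ENNReal.toReal_nonneg

lemma Phi_le_one (x : ℝ) : Phi x ≤ 1 := Phi_eq_cdf ▸ cdf_le_one _ x

lemma tendsto_Phi_atBot : Tendsto Phi atBot (nhds 0) := Phi_eq_cdf ▸ tendsto_cdf_atBot _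

lemma Phi_sub_Phi_le {a b : ℝ} (hab : a ≤ b) : Phi b - Phi a ≤ b - a := by
  have hIoc : gaussianReal 0 1 (Ioc a b) = ENNReal.ofReal (Phi b - Phi a) := by
    rw [← measure_cdf (gaussianReal 0 1), StieltjesFunction.measure_Ioc, Phi_eq_cdf]
  have hle : gaussianReal 0 1 (Ioc a b) ≤ ENNReal.ofReal (b - a) :=
    calc gaussianReal 0 1 (Ioc a b) = ∫⁻ x in Ioc a b, gaussianPDF 0 1 x :=
          gaussianReal_apply 0 one_ne_zero _
      _ ≤ ∫⁻ _ in Ioc a b, 1 := lintegral_mono gaussianPDF_zero_one_le_one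
      _ = ENNReal.ofReal (b - a) := by simp
  exact (ENNReal.ofReal_le_ofReal_iff (by linarith)).1 (hIoc ▸ hle)

lemma lipschitzWith_Phi : LipschitzWith 1 Phi := by
  refine LipschitzWith.of_le_add_mul 1 fun x y => ?_
  rw [NNReal.coe_one, one_mul, Real.dist_eq]
  rcases le_total x y with h | h
  · linarith [monotone_Phi h, abs_nonneg (x - y)]
  · linarith [Phi_sub_Phi_le h, le_abs_self (x - y)]

lemma r_nonneg (b χ : ℝ) : 0 ≤ r b χ := add_nonneg (Phi_nonneg _) (Phi_nonneg _)

lemma r_le_two (b χ : ℝ) : r b χ ≤ 2 := by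
  rw [r]; linarith [Phi_le_one (-χ - b), Phi_le_one (-χ + b)]

lemma continuous_r (χ : ℝ) : Continuous fun b => r b χ :=
  lipschitzWith_Phi.continuous.comp (by fun_prop) |>.add <|
    lipschitzWith_Phi.continuous.comp (by fun_prop)

lemma antitone_r (b : ℝ) : Antitone (r b) := fun _ _ h =>
  add_le_add (monotone_Phi (by linarith)) (monotone_Phi (by linarith))

lemma lipschitzWith_r (b : ℝ) : LipschitzWith 2 (r b) := by
  refine LipschitzWith.of_le_add_mul 2 fun x y => ?_
  have h₁ := lipschitzWith_Phi.le_add_mul (-x - b) (-y - b)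
  have h₂ := lipschitzWith_Phi.le_add_mul (-x + b) (-y + b)
  simp only [dist_sub_right, dist_add_right, dist_neg_neg, NNReal.coe_one, one_mul] at h₁ h₂
  rw [r, r, NNReal.coe_ofNat]
  linarith

lemma integrable_r (χ : ℝ) (F : Measure ℝ) [IsProbabilityMeasure F] :
    Integrable (fun b => r b χ) F :=
  Integrable.of_bound (continuous_r χ).aestronglyMeasurable 2 <| ae_of_all _ fun b => by
    rw [Real.norm_of_nonneg (r_nonneg b χ)]; exact r_le_two b χ

lemma r_le_tail {χ : ℝ} (hχ : 0 < χ) (b : ℝ) :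
    r b χ ≤ 2 * Phi (-χ / 2) + 8 / χ ^ 2 * b ^ 2 := by
  rcases le_or_gt |b| (χ / 2) with hb | hb
  · obtain ⟨hb₁, hb₂⟩ := abs_le.1 hb
    have hquad : 0 ≤ 8 / χ ^ 2 * b ^ 2 := by positivity
    rw [r]
    linarith [monotone_Phi (show -χ - b ≤ -χ / 2 by linarith),
      monotone_Phi (show -χ + b ≤ -χ / 2 by linarith)]
  · have hsq : χ ^ 2 / 4 < b ^ 2 := by
      nlinarith [sq_abs b, abs_nonneg b]
    have hquad : 2 ≤ 8 / χ ^ 2 * b ^ 2 := by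
      rw [div_mul_eq_mul_div, le_div_iff₀ (by positivity)]; linarith
    linarith [r_le_two b χ, Phi_nonneg (-χ / 2)]

lemma integral_r_le_two (χ : ℝ) (F : Measure ℝ) [IsProbabilityMeasure F] :
    ∫ b, r b χ ∂F ≤ 2 := by
  simpa using integral_mono (integrable_r χ F) (integrable_const 2) (r_le_two · χ)

lemma integral_r_le_tail {χ : ℝ} (hχ : 0 < χ) (F : Measure ℝ) [IsProbabilityMeasure F]
    {m₂ : ℝ} (hm : 0 < m₂) (hF : ∫ b, b ^ 2 ∂F = m₂) :
    ∫ b, r b χ ∂F ≤ 2 * Phi (-χ / 2) + 8 / χ ^ 2 * m₂ := by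
  -- `∫ b, b ^ 2 ∂F` is not the junk value `0` of a non-integrable function, since `m₂ ≠ 0`.
  have hsq : Integrable (fun b : ℝ => b ^ 2) F := .of_integral_ne_zero (hF ▸ hm.ne')
  calc ∫ b, r b χ ∂F ≤ ∫ b, (2 * Phi (-χ / 2) + 8 / χ ^ 2 * b ^ 2) ∂F :=
        integral_mono (integrable_r χ F) ((integrable_const _).add (hsq.const_mul _))
          (r_le_tail hχ)
    _ = 2 * Phi (-χ / 2) + 8 / χ ^ 2 * m₂ := by
        rw [integral_add (integrable_const _) (hsq.const_mul _), integral_const,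
          integral_const_mul, hF]
        simp

abbrev WithSecondMoment (m₂ : ℝ) : Type :=
  {F : ProbabilityMeasure ℝ // ∫ b, b ^ 2 ∂(F : Measure ℝ) = m₂}

lemma ρ_eq_iSup (m₂ χ : ℝ) : ρ m₂ χ = ⨆ F : WithSecondMoment m₂, ∫ b, r b χ ∂(F : Measure ℝ) := by
  rw [ρ, iSup]
  congr 1
  ext x
  constructor
  · rintro ⟨F, hF, hm, rfl⟩
    exact ⟨⟨⟨F, hF⟩, hm⟩, rfl⟩
  · rintro ⟨⟨F, hm⟩, rfl⟩
    exact ⟨F, F.2, hm, rfl⟩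

lemma bddAbove_range_integral_r (m₂ χ : ℝ) :
    BddAbove (range fun F : WithSecondMoment m₂ => ∫ b, r b χ ∂(F : Measure ℝ)) :=
  ⟨2, forall_mem_range.2 fun F => integral_r_le_two χ F⟩

lemma antitone_ρ (m₂ : ℝ) : Antitone (ρ m₂) := fun χ₁ χ₂ h => by
  simp only [ρ_eq_iSup]
  exact ciSup_mono (bddAbove_range_integral_r m₂ χ₁) fun F =>
    integral_mono (integrable_r χ₂ _) (integrable_r χ₁ _) fun b => antitone_r b h

lemma lipschitzWith_ρ (m₂ : ℝ) : LipschitzWith 2 (ρ m₂) := by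
  rw [show ρ m₂ = _ from funext (ρ_eq_iSup m₂)]
  exact .ciSup (fun F => .integral lipschitzWith_r (integrable_r · F))
    (bddAbove_range_integral_r m₂)

lemma ρ_nonneg (m₂ χ : ℝ) : 0 ≤ ρ m₂ χ :=
  ρ_eq_iSup m₂ χ ▸ Real.iSup_nonneg fun _ => integral_nonneg (r_nonneg · χ)

lemma ρ_le_tail {m₂ χ : ℝ} (hm : 0 < m₂) (hχ : 0 < χ) :
    ρ m₂ χ ≤ 2 * Phi (-χ / 2) + 8 / χ ^ 2 * m₂ :=
  ρ_eq_iSup m₂ χ ▸ Real.iSup_le (fun F => integral_r_le_tail hχ F hm F.2)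
    (add_nonneg (mul_nonneg zero_le_two (Phi_nonneg _)) (by positivity))

lemma tendsto_ρ_atTop {m₂ : ℝ} (hm : 0 < m₂) : Tendsto (ρ m₂) atTop (nhds 0) := by
  have hΦ : Tendsto (fun χ => Phi (-χ / 2)) atTop (nhds 0) :=
    tendsto_Phi_atBot.comp (tendsto_neg_atTop_atBot.atBot_div_const two_pos)
  have hbound : Tendsto (fun χ => 2 * Phi (-χ / 2) + 8 / χ ^ 2 * m₂) atTop (nhds 0) := by
    simpa using (hΦ.const_mul 2).add
      ((tendsto_const_nhds.div_atTop (tendsto_pow_atTop two_ne_zero)).mul_const m₂)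
  exact tendsto_of_tendsto_of_tendsto_of_le_of_le' tendsto_const_nhds hbound
    (.of_forall (ρ_nonneg m₂)) ((eventually_gt_atTop 0).mono fun _ hχ => ρ_le_tail hm hχ)

/-- For fixed `m₂ > 0`, `ρ(m₂, ·)` is weakly decreasing and continuous on `(0, ∞)`,
and tends to `0` as `χ → ∞`. -/
theorem rho_antitone_continuous (m₂ : ℝ) (hm : 0 < m₂) :
    AntitoneOn (fun χ => ρ m₂ χ) (Set.Ioi 0) ∧
    ContinuousOn (fun χ => ρ m₂ χ) (Set.Ioi 0) ∧
    Filter.Tendsto (fun χ => ρ m₂ χ) Filter.atTop (nhds 0) :=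
  ⟨(antitone_ρ m₂).antitoneOn _, (lipschitzWith_ρ m₂).continuous.continuousOn,
    tendsto_ρ_atTop hm⟩
end
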